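/- Let f be a positive solution of the endangered species equation ∂f/∂t = Δf + f^p on ℝⁿ × (0,∞) with p > 1, let u = log f, let α, β, c be real numbers, and let φ : ℝⁿ × (0,∞) → ℝ be a smooth function. Define the Harnack quantity H := αΔu + β|∇u|² + c·e^{(p-1)u} + φ. Then H satisfies ∂H/∂t = ΔH + 2⟨∇H, ∇u⟩ + (p−1)e^{(p-1)u}H + 2(α−β)|∇∇u|² + (α(p−1) + β − cp)(p−1)e^{(p-1)u}|∇u|² − (p−1)e^{(p-1)u}φ + ∂φ/∂t − Δφ − 2⟨∇φ, ∇u⟩. -/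

import Mathlib

/-- Partial derivative of `g` in the `i`-th coordinate direction. -/
noncomputable def pd {n : ℕ} (i : Fin n) (g : (Fin n → ℝ) → ℝ) (x : Fin n → ℝ) : ℝ :=
  fderiv ℝ g x (Pi.single i 1)

/-- Spatial Laplacian: sum of second partial derivatives. -/
noncomputable def lap {n : ℕ} (g : (Fin n → ℝ) → ℝ) (x : Fin n → ℝ) : ℝ :=
  ∑ i, pd i (pd i g) x

/-- Squared norm of the spatial gradient. -/
noncomputable def gradSq {n : ℕ} (g : (Fin n → ℝ) → ℝ) (x : Fin n → ℝ) : ℝ :=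
  ∑ i, (pd i g x) ^ 2

/-- Squared Frobenius norm of the spatial Hessian. -/
noncomputable def hessSq {n : ℕ} (g : (Fin n → ℝ) → ℝ) (x : Fin n → ℝ) : ℝ :=
  ∑ i, ∑ j, (pd j (pd i g) x) ^ 2



namespace ESE

variable {n : ℕ}

/-- Directional derivative on the product space. -/
noncomputable def P (v : (Fin n → ℝ) × ℝ) (F : (Fin n → ℝ) × ℝ → ℝ)
    (q : (Fin n → ℝ) × ℝ) : ℝ := fderiv ℝ F q v

def Om (n : ℕ) : Set ((Fin n → ℝ) × ℝ) := {q | 0 < q.2}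

lemma isOpen_Om : IsOpen (Om n) := isOpen_lt continuous_const continuous_snd

def Sm (F : (Fin n → ℝ) × ℝ → ℝ) : Prop := ContDiffOn ℝ (⊤ : ℕ∞) F (Om n)

variable {F G : (Fin n → ℝ) × ℝ → ℝ} {q : (Fin n → ℝ) × ℝ} {v w : (Fin n → ℝ) × ℝ}

lemma Sm.ca (hF : Sm F) (hq : q ∈ Om n) : ContDiffAt ℝ (⊤ : ℕ∞) F q :=
  hF.contDiffAt (isOpen_Om.mem_nhds hq)

lemma Sm.da (hF : Sm F) (hq : q ∈ Om n) : DifferentiableAt ℝ F q :=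
  (hF.ca hq).differentiableAt (by simp)

lemma Sm.fderiv (hF : Sm F) : ContDiffOn ℝ (⊤ : ℕ∞) (fun q => _root_.fderiv ℝ F q) (Om n) :=
  hF.fderiv_of_isOpen isOpen_Om (by simp)

lemma Sm.Pv (hF : Sm F) : Sm (ESE.P v F) := by
  have : (P v F) = fun q => (ContinuousLinearMap.apply ℝ ℝ v) (_root_.fderiv ℝ F q) := rfl
  rw [this]
  exact (ContinuousLinearMap.apply ℝ ℝ v).contDiff.comp_contDiffOn hF.fderiv

lemma Sm.da_fderiv (hF : Sm F) (hq : q ∈ Om n) :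
    DifferentiableAt ℝ (fun q => _root_.fderiv ℝ F q) q :=
  ((hF.fderiv).contDiffAt (isOpen_Om.mem_nhds hq)).differentiableAt (by simp)

/-- The second derivative, as it relates to `P`. -/
lemma P_eq_second (hF : Sm F) (hq : q ∈ Om n) :
    P v (P w F) q = _root_.fderiv ℝ (fun q => _root_.fderiv ℝ F q) q v w := by
  have h1 : HasFDerivAt (fun q' => _root_.fderiv ℝ F q')
      (_root_.fderiv ℝ (fun q' => _root_.fderiv ℝ F q') q) q :=
    (hF.da_fderiv hq).hasFDerivAt
  have h2 : HasFDerivAt (P w F)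
      (((ContinuousLinearMap.apply ℝ ℝ w).comp
        (_root_.fderiv ℝ (fun q' => _root_.fderiv ℝ F q') q))) q :=
    ((ContinuousLinearMap.apply ℝ ℝ w).hasFDerivAt.comp q h1)
  simp only [P]
  rw [h2.fderiv]
  rfl

/-- Commutation of directional derivatives for smooth functions. -/
lemma P_comm (hF : Sm F) (hq : q ∈ Om n) : P v (P w F) q = P w (P v F) q := by
  rw [P_eq_second hF hq, P_eq_second hF hq]
  apply second_derivative_symmetric_of_eventually
  · filter_upwards [isOpen_Om.mem_nhds hq] with y hy
    exact (hF.da hy).hasFDerivAt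
  · exact (hF.da_fderiv hq).hasFDerivAt

/-- Congruence: `P` only depends on values on `Om`. -/
lemma P_congr (hFG : ∀ q ∈ Om n, F q = G q) (hq : q ∈ Om n) : P v F q = P v G q := by
  have : F =ᶠ[nhds q] G := by
    filter_upwards [isOpen_Om.mem_nhds hq] with y hy using hFG y hy
  simp only [P, this.fderiv_eq]

lemma P_add (hF : DifferentiableAt ℝ F q) (hG : DifferentiableAt ℝ G q) :
    P v (fun q => F q + G q) q = P v F q + P v G q := by
  simp only [P]
  rw [HasFDerivAt.fderiv (f := fun q => F q + G q) (hF.hasFDerivAt.add hG.hasFDerivAt)]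
  simp

lemma P_mul (hF : DifferentiableAt ℝ F q) (hG : DifferentiableAt ℝ G q) :
    P v (fun q => F q * G q) q = P v F q * G q + F q * P v G q := by
  simp only [P]
  rw [HasFDerivAt.fderiv (f := fun q => F q * G q) (hF.hasFDerivAt.mul hG.hasFDerivAt)]
  simp only [ContinuousLinearMap.add_apply, ContinuousLinearMap.coe_smul', Pi.smul_apply,
    smul_eq_mul]
  ring

lemma P_const_mul (hF : DifferentiableAt ℝ F q) (a : ℝ) :
    P v (fun q => a * F q) q = a * P v F q := by
  simp only [P]
  rw [(hF.hasFDerivAt.const_mul a).fderiv]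
  simp

lemma P_sq (hF : DifferentiableAt ℝ F q) :
    P v (fun q => (F q) ^ 2) q = 2 * F q * P v F q := by
  have := P_mul (v := v) hF hF
  simp only [← sq] at this
  rw [this]; ring

lemma P_sum {ι : Type*} {s : Finset ι} {A : ι → ((Fin n → ℝ) × ℝ) → ℝ}
    (h : ∀ i ∈ s, DifferentiableAt ℝ (A i) q) :
    P v (fun q => ∑ i ∈ s, A i q) q = ∑ i ∈ s, P v (A i) q := by
  simp only [P]
  rw [fderiv_fun_sum h]
  simp

lemma P_exp (hF : DifferentiableAt ℝ F q) :
    P v (fun q => Real.exp (F q)) q = Real.exp (F q) * P v F q := by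
  simp only [P]
  rw [(hF.hasFDerivAt.exp).fderiv]
  simp [mul_comm]

lemma P_log (hF : DifferentiableAt ℝ F q) (h0 : F q ≠ 0) :
    P v (fun q => Real.log (F q)) q = P v F q / F q := by
  simp only [P]
  rw [(hF.hasFDerivAt.log h0).fderiv]
  simp [div_eq_inv_mul]

lemma P_inv (hF : DifferentiableAt ℝ F q) (h0 : F q ≠ 0) :
    P v (fun q => (F q)⁻¹) q = -(P v F q) / (F q) ^ 2 := by
  have h : HasFDerivAt (fun q => (F q)⁻¹) ((-((F q) ^ 2)⁻¹) • _root_.fderiv ℝ F q) q :=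
    (hasDerivAt_inv h0).comp_hasFDerivAt q hF.hasFDerivAt
  simp only [P]
  rw [h.fderiv]
  simp [P, neg_div, div_eq_inv_mul, mul_comm]

/-- spatial basis directions -/
noncomputable def ei (i : Fin n) : (Fin n → ℝ) × ℝ := (Pi.single i 1, 0)
noncomputable def et (n : ℕ) : (Fin n → ℝ) × ℝ := (0, 1)

/-- slice lemma, spatial -/
lemma pd_slice (hF : Sm F) {x : Fin n → ℝ} {t : ℝ} (ht : 0 < t) (i : Fin n) :
    pd i (fun y => F (y, t)) x = P (ei i) F (x, t) := by
  have hq : ((x, t) : (Fin n → ℝ) × ℝ) ∈ Om n := ht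
  have h1 : HasFDerivAt (fun y : Fin n → ℝ => (y, t))
      (ContinuousLinearMap.inl ℝ (Fin n → ℝ) ℝ) x := hasFDerivAt_prodMk_left x t
  have h2 : HasFDerivAt (fun y => F (y, t))
      ((_root_.fderiv ℝ F (x, t)).comp (ContinuousLinearMap.inl ℝ (Fin n → ℝ) ℝ)) x :=
    (hF.da hq).hasFDerivAt.comp x h1
  rw [pd, h2.fderiv]
  rfl

/-- slice lemma, time -/
lemma deriv_slice (hF : Sm F) {x : Fin n → ℝ} {t : ℝ} (ht : 0 < t) :
    deriv (fun s => F (x, s)) t = P (et n) F (x, t) := by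
  have hq : ((x, t) : (Fin n → ℝ) × ℝ) ∈ Om n := ht
  have h1 : HasFDerivAt (fun s : ℝ => (x, s))
      (ContinuousLinearMap.inr ℝ (Fin n → ℝ) ℝ) t := hasFDerivAt_prodMk_right x t
  have h2 : HasFDerivAt (fun s => F (x, s))
      ((_root_.fderiv ℝ F (x, t)).comp (ContinuousLinearMap.inr ℝ (Fin n → ℝ) ℝ)) t :=
    (hF.da hq).hasFDerivAt.comp t h1
  rw [h2.hasDerivAt.deriv]
  rfl


lemma Sm.add (hF : Sm F) (hG : Sm G) : Sm (fun q => F q + G q) := ContDiffOn.add hF hG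

lemma Sm.mul (hF : Sm F) (hG : Sm G) : Sm (fun q => F q * G q) := ContDiffOn.mul hF hG

lemma Sm.const_mul (hF : Sm F) (a : ℝ) : Sm (fun q => a * F q) :=
  ContDiffOn.mul contDiffOn_const hF

lemma Sm.exp (hF : Sm F) : Sm (fun q => Real.exp (F q)) := ContDiffOn.exp hF

lemma Sm.sq (hF : Sm F) : Sm (fun q => (F q) ^ 2) := ContDiffOn.pow hF 2

lemma Sm.sum {ι : Type*} {s : Finset ι} {A : ι → ((Fin n → ℝ) × ℝ) → ℝ}
    (h : ∀ i ∈ s, Sm (A i)) : Sm (fun q => ∑ i ∈ s, A i q) := ContDiffOn.sum h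

lemma pd_pd_slice (hF : Sm F) {x : Fin n → ℝ} {t : ℝ} (ht : 0 < t) (i j : Fin n) :
    pd j (pd i (fun y => F (y, t))) x = P (ei j) (P (ei i) F) (x, t) := by
  have h1 : pd i (fun y => F (y, t)) = fun y => P (ei i) F (y, t) := by
    funext y; exact pd_slice hF ht i
  rw [h1, pd_slice hF.Pv ht j]

lemma lap_slice (hF : Sm F) {x : Fin n → ℝ} {t : ℝ} (ht : 0 < t) :
    lap (fun y => F (y, t)) x = ∑ i, P (ei i) (P (ei i) F) (x, t) := by
  unfold lap; exact Finset.sum_congr rfl fun i _ => pd_pd_slice hF ht i i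

lemma gradSq_slice (hF : Sm F) {x : Fin n → ℝ} {t : ℝ} (ht : 0 < t) :
    gradSq (fun y => F (y, t)) x = ∑ i, (P (ei i) F (x, t)) ^ 2 := by
  unfold gradSq; exact Finset.sum_congr rfl fun i _ => by rw [pd_slice hF ht i]

lemma hessSq_slice (hF : Sm F) {x : Fin n → ℝ} {t : ℝ} (ht : 0 < t) :
    hessSq (fun y => F (y, t)) x = ∑ i, ∑ j, (P (ei j) (P (ei i) F) (x, t)) ^ 2 := by
  unfold hessSq
  exact Finset.sum_congr rfl fun i _ => Finset.sum_congr rfl fun j _ => by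
    rw [pd_pd_slice hF ht i j]

end ESE
namespace ESE

variable {n : ℕ} {F G K M : (Fin n → ℝ) × ℝ → ℝ} {q v w : (Fin n → ℝ) × ℝ}

/-- derivative of `α F + β G + c K + M` -/
lemma P_comb (hF : DifferentiableAt ℝ F q) (hG : DifferentiableAt ℝ G q)
    (hK : DifferentiableAt ℝ K q) (hM : DifferentiableAt ℝ M q) (a b c : ℝ) :
    P v (fun q => a * F q + b * G q + c * K q + M q) q
      = a * P v F q + b * P v G q + c * P v K q + P v M q := by
  have h := (((hF.hasFDerivAt.const_mul a).add (hG.hasFDerivAt.const_mul b)).add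
      (hK.hasFDerivAt.const_mul c)).add hM.hasFDerivAt
  simp only [P]
  rw [HasFDerivAt.fderiv (f := fun q => a * F q + b * G q + c * K q + M q) h]
  simp [ContinuousLinearMap.add_apply]

lemma P_add3 (hF : DifferentiableAt ℝ F q) (hG : DifferentiableAt ℝ G q)
    (hK : DifferentiableAt ℝ K q) :
    P v (fun q => F q + G q + K q) q = P v F q + P v G q + P v K q := by
  have h := (hF.hasFDerivAt.add hG.hasFDerivAt).add hK.hasFDerivAt
  simp only [P]
  rw [HasFDerivAt.fderiv (f := fun q => F q + G q + K q) h]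
  simp [ContinuousLinearMap.add_apply]

lemma P_mul2 (hF : DifferentiableAt ℝ F q) (hG : DifferentiableAt ℝ G q) (a : ℝ) :
    P v (fun q => a * F q * G q) q
      = a * (P v F q * G q + F q * P v G q) := by
  have h := (hF.hasFDerivAt.const_mul a).mul hG.hasFDerivAt
  simp only [P]
  rw [HasFDerivAt.fderiv (f := fun q => a * F q * G q) h]
  simp only [ContinuousLinearMap.add_apply, ContinuousLinearMap.coe_smul', Pi.smul_apply,
    smul_eq_mul]
  ring

/-- the building blocks -/
noncomputable def Lp (U : (Fin n → ℝ) × ℝ → ℝ) (q : (Fin n → ℝ) × ℝ) : ℝ :=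
  ∑ i, P (ei i) (P (ei i) U) q
noncomputable def Gg (U : (Fin n → ℝ) × ℝ → ℝ) (q : (Fin n → ℝ) × ℝ) : ℝ :=
  ∑ i, (P (ei i) U q) ^ 2
noncomputable def Ee (p : ℝ) (U : (Fin n → ℝ) × ℝ → ℝ) (q : (Fin n → ℝ) × ℝ) : ℝ :=
  Real.exp ((p - 1) * U q)
noncomputable def Hh (p a b c : ℝ) (U Φ : (Fin n → ℝ) × ℝ → ℝ) (q : (Fin n → ℝ) × ℝ) : ℝ :=
  a * Lp U q + b * Gg U q + c * Ee p U q + Φ q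

variable {U Φ : (Fin n → ℝ) × ℝ → ℝ} {p a b c : ℝ}

lemma Sm.Lp (hU : Sm U) : Sm (ESE.Lp U) :=
  Sm.sum (fun i _ => (hU.Pv).Pv)

lemma Sm.Gg (hU : Sm U) : Sm (ESE.Gg U) :=
  Sm.sum (fun i _ => (hU.Pv).sq)

lemma Sm.Ee (hU : Sm U) : Sm (ESE.Ee p U) :=
  Sm.exp (hU.const_mul (p - 1))

lemma Sm.Hh (hU : Sm U) (hΦ : Sm Φ) : Sm (ESE.Hh p a b c U Φ) :=
  ((((hU.Lp.const_mul a).add (hU.Gg.const_mul b)).add (hU.Ee.const_mul c)).add hΦ)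

/-- derivative of `Ee` -/
lemma P_Ee (hU : Sm U) (hq : q ∈ Om n) :
    P v (ESE.Ee p U) q = (p - 1) * P v U q * ESE.Ee p U q := by
  have h1 : P v (ESE.Ee p U) q
      = Real.exp ((p-1) * U q) * P v (fun q => (p-1) * U q) q :=
    P_exp ((hU.const_mul (p-1)).da hq)
  rw [h1, P_const_mul (hU.da hq)]
  unfold ESE.Ee
  ring

/-- derivative of `Gg` -/
lemma P_Gg (hU : Sm U) (hq : q ∈ Om n) :
    P v (ESE.Gg U) q = ∑ i, 2 * P (ei i) U q * P v (P (ei i) U) q := by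
  have h1 : P v (ESE.Gg U) q = ∑ i, P v (fun q => (P (ei i) U q) ^ 2) q :=
    P_sum (fun i _ => ((hU.Pv).sq).da hq)
  rw [h1]
  exact Finset.sum_congr rfl fun i _ => by rw [P_sq ((hU.Pv).da hq)]

/-- derivative of `Lp` -/
lemma P_Lp (hU : Sm U) (hq : q ∈ Om n) :
    P v (ESE.Lp U) q = ∑ i, P v (P (ei i) (P (ei i) U)) q :=
  P_sum (fun i _ => ((hU.Pv).Pv).da hq)

/-- derivative of `Hh` -/
lemma P_Hh (hU : Sm U) (hΦ : Sm Φ) (hq : q ∈ Om n) :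
    P v (ESE.Hh p a b c U Φ) q
      = a * P v (ESE.Lp U) q + b * P v (ESE.Gg U) q + c * P v (ESE.Ee p U) q + P v Φ q :=
  P_comb (hU.Lp.da hq) (hU.Gg.da hq) (hU.Ee.da hq) (hΦ.da hq) a b c

/-- third order commutation -/
lemma P_comm3 (hU : Sm U) (hq : q ∈ Om n) (i : Fin n) :
    P v (P (ei i) (P (ei i) U)) q = P (ei i) (P (ei i) (P v U)) q := by
  rw [P_comm hU.Pv hq]
  exact P_congr (fun q' hq' => P_comm hU hq') hq

end ESE
namespace ESE

variable {n : ℕ}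

lemma pde_U (p : ℝ) (F0 : (Fin n → ℝ) × ℝ → ℝ) (hF0 : Sm F0)
    (hpos : ∀ q ∈ Om n, 0 < F0 q)
    (hpde : ∀ q ∈ Om n, P (et n) F0 q
      = (∑ i, P (ei i) (P (ei i) F0) q) + (F0 q) ^ p) :
    ∀ q ∈ Om n, P (et n) (fun q => Real.log (F0 q)) q
      = Lp (fun q => Real.log (F0 q)) q + Gg (fun q => Real.log (F0 q)) q
        + Ee p (fun q => Real.log (F0 q)) q := by
  have hne : ∀ q ∈ Om n, F0 q ≠ 0 := fun q hq => ne_of_gt (hpos q hq)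
  have hU : Sm (fun q => Real.log (F0 q)) := ContDiffOn.log hF0 hne
  have hlog : ∀ (v : (Fin n → ℝ) × ℝ), ∀ q ∈ Om n,
      P v (fun q => Real.log (F0 q)) q = P v F0 q * (F0 q)⁻¹ := by
    intro v q hq
    rw [P_log (hF0.da hq) (hne q hq), div_eq_mul_inv]
  intro q hq
  have hsec : ∀ i : Fin n, P (ei i) (P (ei i) (fun q => Real.log (F0 q))) q
      = P (ei i) (P (ei i) F0) q * (F0 q)⁻¹
        + P (ei i) F0 q * (-(P (ei i) F0 q) / (F0 q) ^ 2) := by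
    intro i
    rw [P_congr (fun q' hq' => hlog (ei i) q' hq') hq]
    rw [P_mul (G := fun q => (F0 q)⁻¹) ((hF0.Pv).da hq) ((hF0.da hq).inv (hne q hq))]
    rw [P_inv (hF0.da hq) (hne q hq)]
  have hLp : Lp (fun q => Real.log (F0 q)) q
      = (∑ i, P (ei i) (P (ei i) F0) q) * (F0 q)⁻¹
        + (∑ i, (P (ei i) F0 q) ^ 2) * (-(F0 q ^ 2)⁻¹) := by
    unfold Lp
    rw [Finset.sum_congr rfl fun i _ => hsec i]
    rw [Finset.sum_add_distrib, ← Finset.sum_mul]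
    congr 1
    rw [Finset.sum_congr rfl fun i _ =>
      show P (ei i) F0 q * (-(P (ei i) F0 q) / (F0 q) ^ 2)
        = (P (ei i) F0 q) ^ 2 * (-(F0 q ^ 2)⁻¹) from by ring]
    rw [← Finset.sum_mul]
  have hGg : Gg (fun q => Real.log (F0 q)) q
      = (∑ i, (P (ei i) F0 q) ^ 2) * ((F0 q)⁻¹) ^ 2 := by
    unfold Gg
    rw [Finset.sum_congr rfl fun i _ =>
      show (P (ei i) (fun q => Real.log (F0 q)) q) ^ 2
        = (P (ei i) F0 q) ^ 2 * ((F0 q)⁻¹) ^ 2 from by rw [hlog (ei i) q hq]; ring]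
    rw [← Finset.sum_mul]
  have hEe : Ee p (fun q => Real.log (F0 q)) q = (F0 q) ^ p * (F0 q)⁻¹ := by
    unfold Ee
    rw [mul_comm, ← Real.rpow_def_of_pos (hpos q hq)]
    rw [show p - 1 = p - (1:ℝ) from rfl, Real.rpow_sub (hpos q hq), Real.rpow_one,
      div_eq_mul_inv]
  rw [hlog (et n) q hq, hpde q hq, hLp, hGg, hEe]
  have h0 : (F0 q) ≠ 0 := hne q hq
  field_simp
  ring

end ESE
namespace ESE

variable {n : ℕ}

lemma core (p a b c : ℝ) (U Φ : (Fin n → ℝ) × ℝ → ℝ) (hU : Sm U) (hΦ : Sm Φ)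
    (hPtU : ∀ q ∈ Om n, P (et n) U q = Lp U q + Gg U q + Ee p U q) :
    ∀ q ∈ Om n,
      P (et n) (Hh p a b c U Φ) q =
        (∑ i, P (ei i) (P (ei i) (Hh p a b c U Φ)) q)
        + 2 * ∑ i, P (ei i) (Hh p a b c U Φ) q * P (ei i) U q
        + (p - 1) * Ee p U q * Hh p a b c U Φ q
        + 2 * (a - b) * (∑ i, ∑ j, (P (ei j) (P (ei i) U) q) ^ 2)
        + (a * (p - 1) + b - c * p) * (p - 1) * Ee p U q * Gg U q
        - (p - 1) * Ee p U q * Φ q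
        + P (et n) Φ q
        - (∑ i, P (ei i) (P (ei i) Φ) q)
        - 2 * ∑ i, P (ei i) Φ q * P (ei i) U q := by
  intro q hq
  -- abbreviation lemmas
  have hWadd : ∀ (v : (Fin n → ℝ) × ℝ), ∀ q' ∈ Om n,
      P v (fun q'' => Lp U q'' + Gg U q'' + Ee p U q'') q'
        = P v (Lp U) q' + P v (Gg U) q' + P v (Ee p U) q' := fun v q' hq' =>
    P_add3 (hU.Lp.da hq') (hU.Gg.da hq') (hU.Ee.da hq')
  -- ∂_t L
  have hPtL : P (et n) (Lp U) q
      = ∑ i, (P (ei i) (P (ei i) (Lp U)) q + P (ei i) (P (ei i) (Gg U)) q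
          + P (ei i) (P (ei i) (Ee p U)) q) := by
    rw [P_Lp hU hq]
    refine Finset.sum_congr rfl fun i _ => ?_
    rw [P_comm3 hU hq i]
    rw [P_congr (fun q' hq' => P_congr (G := fun q'' => Lp U q'' + Gg U q'' + Ee p U q'')
      hPtU hq') hq]
    rw [P_congr (fun q' hq' => hWadd (ei i) q' hq') hq]
    exact P_add3 ((hU.Lp.Pv).da hq) ((hU.Gg.Pv).da hq) ((hU.Ee.Pv).da hq)
  -- ∂_t G
  have hPtG : P (et n) (Gg U) q
      = ∑ i, 2 * P (ei i) U q * (P (ei i) (Lp U) q + P (ei i) (Gg U) q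
          + (p - 1) * P (ei i) U q * Ee p U q) := by
    rw [P_Gg hU hq]
    refine Finset.sum_congr rfl fun i _ => ?_
    congr 1
    rw [P_comm hU hq]
    rw [P_congr (G := fun q'' => Lp U q'' + Gg U q'' + Ee p U q'') hPtU hq]
    rw [hWadd (ei i) q hq]
    rw [P_Ee hU hq]
  -- ∂_t E
  have hPtE : P (et n) (Ee p U) q
      = (p - 1) * (Lp U q + Gg U q + Ee p U q) * Ee p U q := by
    rw [P_Ee hU hq, hPtU q hq]
  -- second spatial derivatives of E
  have hPPE : ∀ i : Fin n, P (ei i) (P (ei i) (Ee p U)) q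
      = (p - 1) * (P (ei i) (P (ei i) U) q * Ee p U q
          + P (ei i) U q * ((p - 1) * P (ei i) U q * Ee p U q)) := by
    intro i
    rw [P_congr (G := fun q' => (p - 1) * P (ei i) U q' * Ee p U q')
      (fun q' hq' => P_Ee hU hq') hq]
    rw [P_mul2 ((hU.Pv).da hq) (hU.Ee.da hq) (p - 1)]
    rw [P_Ee hU hq]
  have hSPPE : ∑ i, P (ei i) (P (ei i) (Ee p U)) q
      = (p - 1) * Lp U q * Ee p U q + (p - 1) ^ 2 * Gg U q * Ee p U q := by
    rw [Finset.sum_congr rfl fun i _ => (hPPE i).trans (by ring :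
      (p - 1) * (P (ei i) (P (ei i) U) q * Ee p U q
          + P (ei i) U q * ((p - 1) * P (ei i) U q * Ee p U q))
        = P (ei i) (P (ei i) U) q * ((p - 1) * Ee p U q)
          + (P (ei i) U q) ^ 2 * ((p - 1) ^ 2 * Ee p U q))]
    rw [Finset.sum_add_distrib, ← Finset.sum_mul, ← Finset.sum_mul]
    show Lp U q * ((p - 1) * Ee p U q) + Gg U q * ((p - 1) ^ 2 * Ee p U q) = _
    ring
  -- second spatial derivatives of G
  have hPPG : ∀ i : Fin n, P (ei i) (P (ei i) (Gg U)) q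
      = ∑ j, (2 * (P (ei i) (P (ei j) U) q * P (ei i) (P (ei j) U) q
          + P (ei j) U q * P (ei i) (P (ei i) (P (ei j) U)) q)) := by
    intro i
    rw [P_congr (G := fun q' => ∑ j, 2 * P (ei j) U q' * P (ei i) (P (ei j) U) q')
      (fun q' hq' => P_Gg hU hq') hq]
    rw [P_sum (A := fun j q' => 2 * P (ei j) U q' * P (ei i) (P (ei j) U) q') (fun j _ => DifferentiableAt.mul
      (((hU.Pv).da hq).const_mul 2) (((hU.Pv).Pv).da hq))]
    exact Finset.sum_congr rfl fun j _ => P_mul2 ((hU.Pv).da hq) (((hU.Pv).Pv).da hq) 2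
  have hT : ∀ j : Fin n, P (ei j) (Lp U) q
      = ∑ i, P (ei i) (P (ei i) (P (ei j) U)) q := by
    intro j
    rw [P_Lp hU hq]
    exact Finset.sum_congr rfl fun i _ => P_comm3 hU hq i
  have hSPPG : ∑ i, P (ei i) (P (ei i) (Gg U)) q
      = 2 * (∑ i, ∑ j, (P (ei j) (P (ei i) U) q) ^ 2)
        + 2 * ∑ j, P (ei j) U q * P (ei j) (Lp U) q := by
    calc ∑ i, P (ei i) (P (ei i) (Gg U)) q
        = ∑ i, ∑ j, (2 * (P (ei i) (P (ei j) U) q) ^ 2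
            + 2 * (P (ei j) U q * P (ei i) (P (ei i) (P (ei j) U)) q)) := by
          refine Finset.sum_congr rfl fun i _ => ?_
          rw [hPPG i]
          exact Finset.sum_congr rfl fun j _ => by ring
      _ = (∑ i, ∑ j, 2 * (P (ei i) (P (ei j) U) q) ^ 2)
          + ∑ i, ∑ j, 2 * (P (ei j) U q * P (ei i) (P (ei i) (P (ei j) U)) q) := by
          rw [← Finset.sum_add_distrib]
          exact Finset.sum_congr rfl fun i _ => Finset.sum_add_distrib
      _ = 2 * (∑ i, ∑ j, (P (ei j) (P (ei i) U) q) ^ 2)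
          + 2 * ∑ j, P (ei j) U q * P (ei j) (Lp U) q := by
          congr 1
          · rw [Finset.sum_comm, Finset.mul_sum]
            exact Finset.sum_congr rfl fun i _ => by rw [Finset.mul_sum]
          · rw [Finset.sum_comm, Finset.mul_sum]
            refine Finset.sum_congr rfl fun j _ => ?_
            rw [hT j, Finset.mul_sum, Finset.mul_sum]
  -- spatial laplacian of Hh
  have hPPH : ∑ i, P (ei i) (P (ei i) (Hh p a b c U Φ)) q
      = a * (∑ i, P (ei i) (P (ei i) (Lp U)) q)
        + b * (∑ i, P (ei i) (P (ei i) (Gg U)) q)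
        + c * (∑ i, P (ei i) (P (ei i) (Ee p U)) q)
        + ∑ i, P (ei i) (P (ei i) Φ) q := by
    rw [Finset.sum_congr rfl fun i _ => show P (ei i) (P (ei i) (Hh p a b c U Φ)) q
        = a * P (ei i) (P (ei i) (Lp U)) q + b * P (ei i) (P (ei i) (Gg U)) q
          + c * P (ei i) (P (ei i) (Ee p U)) q + P (ei i) (P (ei i) Φ) q from by
      rw [P_congr (G := fun q' => a * P (ei i) (Lp U) q' + b * P (ei i) (Gg U) q'
          + c * P (ei i) (Ee p U) q' + P (ei i) Φ q')
        (fun q' hq' => P_Hh hU hΦ hq') hq]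
      exact P_comb ((hU.Lp.Pv).da hq) ((hU.Gg.Pv).da hq) ((hU.Ee.Pv).da hq)
        ((hΦ.Pv).da hq) a b c]
    rw [Finset.sum_add_distrib, Finset.sum_add_distrib, Finset.sum_add_distrib,
      ← Finset.mul_sum, ← Finset.mul_sum, ← Finset.mul_sum]
  -- gradient pairing of Hh
  have hPH2 : ∑ i, P (ei i) (Hh p a b c U Φ) q * P (ei i) U q
      = a * (∑ i, P (ei i) U q * P (ei i) (Lp U) q)
        + b * (∑ i, P (ei i) U q * P (ei i) (Gg U) q)
        + c * (p - 1) * Ee p U q * Gg U q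
        + ∑ i, P (ei i) U q * P (ei i) Φ q := by
    rw [Finset.sum_congr rfl fun i _ => show P (ei i) (Hh p a b c U Φ) q * P (ei i) U q
        = a * (P (ei i) U q * P (ei i) (Lp U) q) + b * (P (ei i) U q * P (ei i) (Gg U) q)
          + (c * (p - 1) * Ee p U q) * (P (ei i) U q) ^ 2
          + P (ei i) U q * P (ei i) Φ q from by
      rw [P_Hh hU hΦ hq, P_Ee hU hq]; ring]
    rw [Finset.sum_add_distrib, Finset.sum_add_distrib, Finset.sum_add_distrib,
      ← Finset.mul_sum, ← Finset.mul_sum, ← Finset.mul_sum]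
    show _ + (c * (p - 1) * Ee p U q) * Gg U q + _ = _
    ring
  -- ∂_t G, summed form
  have hPtG2 : P (et n) (Gg U) q
      = 2 * (∑ i, P (ei i) U q * P (ei i) (Lp U) q)
        + 2 * (∑ i, P (ei i) U q * P (ei i) (Gg U) q)
        + 2 * (p - 1) * Ee p U q * Gg U q := by
    rw [hPtG]
    rw [Finset.sum_congr rfl fun i _ => show
        2 * P (ei i) U q * (P (ei i) (Lp U) q + P (ei i) (Gg U) q
          + (p - 1) * P (ei i) U q * Ee p U q)
        = 2 * (P (ei i) U q * P (ei i) (Lp U) q) + 2 * (P (ei i) U q * P (ei i) (Gg U) q)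
          + (2 * (p - 1) * Ee p U q) * (P (ei i) U q) ^ 2 from by ring]
    rw [Finset.sum_add_distrib, Finset.sum_add_distrib,
      ← Finset.mul_sum, ← Finset.mul_sum, ← Finset.mul_sum]
    show _ + (2 * (p - 1) * Ee p U q) * Gg U q = _
    ring
  -- ∂_t L, summed form
  have hPtL2 : P (et n) (Lp U) q
      = (∑ i, P (ei i) (P (ei i) (Lp U)) q)
        + (2 * (∑ i, ∑ j, (P (ei j) (P (ei i) U) q) ^ 2)
            + 2 * ∑ i, P (ei i) U q * P (ei i) (Lp U) q)
        + ((p - 1) * Lp U q * Ee p U q + (p - 1) ^ 2 * Gg U q * Ee p U q) := by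
    rw [hPtL, Finset.sum_add_distrib, Finset.sum_add_distrib, hSPPG, hSPPE]
  -- the time derivative of Hh
  have hPtH : P (et n) (Hh p a b c U Φ) q
      = a * P (et n) (Lp U) q + b * P (et n) (Gg U) q + c * P (et n) (Ee p U) q
        + P (et n) Φ q := P_Hh hU hΦ hq
  -- assemble
  have hlast : ∑ i, P (ei i) Φ q * P (ei i) U q = ∑ i, P (ei i) U q * P (ei i) Φ q :=
    Finset.sum_congr rfl fun i _ => mul_comm _ _
  rw [hPtH, hPtL2, hPtG2, hPtE, hPPH, hSPPG, hSPPE, hPH2, hlast,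
    show Hh p a b c U Φ q = a * Lp U q + b * Gg U q + c * Ee p U q + Φ q from rfl]
  ring

end ESE

/-- Lemma 2.1: evolution equation for the Harnack quantity
`H = αΔu + β|∇u|² + c e^{(p-1)u} + φ`, where `u = log f` and `f > 0` solves
`∂f/∂t = Δf + f^p`. -/
theorem ese_harnack_quantity_evolution (n : ℕ) (hn : 1 ≤ n) (p : ℝ) (hp : 1 < p)
    (f : (Fin n → ℝ) → ℝ → ℝ)
    (hf_smooth : ContDiffOn ℝ (⊤ : ℕ∞) (fun q : (Fin n → ℝ) × ℝ => f q.1 q.2) {q | 0 < q.2})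
    (hf_pos : ∀ x t, 0 < t → 0 < f x t)
    (hf_pde : ∀ x t, 0 < t →
      deriv (fun s => f x s) t = lap (fun y => f y t) x + (f x t) ^ p)
    (u : (Fin n → ℝ) → ℝ → ℝ)
    (hu : ∀ x t, u x t = Real.log (f x t))
    (α β c : ℝ)
    (φ : (Fin n → ℝ) → ℝ → ℝ)
    (hφ_smooth : ContDiffOn ℝ (⊤ : ℕ∞) (fun q : (Fin n → ℝ) × ℝ => φ q.1 q.2) {q | 0 < q.2})
    (H : (Fin n → ℝ) → ℝ → ℝ)
    (hH : ∀ x t, H x t =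
      α * lap (fun y => u y t) x + β * gradSq (fun y => u y t) x
        + c * Real.exp ((p - 1) * u x t) + φ x t) :
    ∀ x t, 0 < t →
      deriv (fun s => H x s) t =
        lap (fun y => H y t) x
          + 2 * ∑ i, pd i (fun y => H y t) x * pd i (fun y => u y t) x
          + (p - 1) * Real.exp ((p - 1) * u x t) * H x t
          + 2 * (α - β) * hessSq (fun y => u y t) x
          + (α * (p - 1) + β - c * p) * (p - 1) * Real.exp ((p - 1) * u x t)
              * gradSq (fun y => u y t) x
          - (p - 1) * Real.exp ((p - 1) * u x t) * φ x t
          + deriv (fun s => φ x s) t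
          - lap (fun y => φ y t) x
          - 2 * ∑ i, pd i (fun y => φ y t) x * pd i (fun y => u y t) x := by
  intro x t ht
  have hq0 : ((x, t) : (Fin n → ℝ) × ℝ) ∈ ESE.Om n := ht
  set F0 : (Fin n → ℝ) × ℝ → ℝ := fun q => f q.1 q.2 with hF0def
  have hF0 : ESE.Sm F0 := hf_smooth
  have hpos : ∀ q ∈ ESE.Om n, 0 < F0 q := fun q hq => hf_pos q.1 q.2 hq
  set U : (Fin n → ℝ) × ℝ → ℝ := fun q => Real.log (F0 q) with hUdef
  have hU : ESE.Sm U := ContDiffOn.log hF0 (fun q hq => ne_of_gt (hpos q hq))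
  have hUu : ∀ y s, u y s = U (y, s) := fun y s => hu y s
  have huslice : ∀ s, (fun y => u y s) = fun y => U (y, s) := fun s => funext fun y => hUu y s
  set Φ : (Fin n → ℝ) × ℝ → ℝ := fun q => φ q.1 q.2 with hΦdef
  have hΦ : ESE.Sm Φ := hφ_smooth
  -- PDE for F0 in product form
  have hpde : ∀ q ∈ ESE.Om n, ESE.P (ESE.et n) F0 q
      = (∑ i, ESE.P (ESE.ei i) (ESE.P (ESE.ei i) F0) q) + (F0 q) ^ p := by
    rintro ⟨y, s⟩ hs
    rw [← ESE.deriv_slice hF0 hs]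
    have h1 : (fun s' => F0 (y, s')) = fun s' => f y s' := rfl
    rw [h1, hf_pde y s hs, ← ESE.lap_slice hF0 hs]
  have hPtU : ∀ q ∈ ESE.Om n, ESE.P (ESE.et n) U q
      = ESE.Lp U q + ESE.Gg U q + ESE.Ee p U q :=
    ESE.pde_U p F0 hF0 hpos hpde
  -- the Harnack quantity in product form
  have hHf : ESE.Sm (ESE.Hh p α β c U Φ) := ESE.Sm.Hh hU hΦ
  have hHslice : ∀ s, 0 < s → (fun y => H y s) = fun y => ESE.Hh p α β c U Φ (y, s) := by
    intro s hs
    funext y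
    rw [hH y s, huslice s, ESE.lap_slice hU hs, ESE.gradSq_slice hU hs, hUu y s]
    rfl
  -- left-hand side
  have hLHS : deriv (fun s => H x s) t = ESE.P (ESE.et n) (ESE.Hh p α β c U Φ) (x, t) := by
    have hev : (fun s => H x s) =ᶠ[nhds t] (fun s => ESE.Hh p α β c U Φ (x, s)) := by
      filter_upwards [Ioi_mem_nhds ht] with s hs
      exact congrFun (hHslice s hs) x
    rw [hev.deriv_eq, ESE.deriv_slice hHf ht]
  -- rewrite the goal into product form
  rw [hLHS, hHslice t ht, huslice t]
  rw [ESE.lap_slice hHf ht, ESE.lap_slice hΦ ht,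
    ESE.gradSq_slice hU ht, ESE.hessSq_slice hU ht]
  rw [show (fun s => φ x s) = fun s => Φ (x, s) from rfl, ESE.deriv_slice hΦ ht]
  have hsum1 : (∑ i, pd i (fun y => ESE.Hh p α β c U Φ (y, t)) x * pd i (fun y => U (y, t)) x)
      = ∑ i, ESE.P (ESE.ei i) (ESE.Hh p α β c U Φ) (x, t) * ESE.P (ESE.ei i) U (x, t) :=
    Finset.sum_congr rfl fun i _ => by
      rw [ESE.pd_slice hHf ht i, ESE.pd_slice hU ht i]
  have hsum2 : (∑ i, pd i (fun y => Φ (y, t)) x * pd i (fun y => U (y, t)) x)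
      = ∑ i, ESE.P (ESE.ei i) Φ (x, t) * ESE.P (ESE.ei i) U (x, t) :=
    Finset.sum_congr rfl fun i _ => by
      rw [ESE.pd_slice hΦ ht i, ESE.pd_slice hU ht i]
  rw [hsum1, hsum2]
  rw [hH x t, huslice t, ESE.lap_slice hU ht, ESE.gradSq_slice hU ht, hUu x t]
  exact ESE.core p α β c U Φ hU hΦ hPtU (x, t) hq0
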